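/- Let Λ be a finite nonempty index set, b : Λ → ℕ, and c : Λ → ℕ with c(λ) ≥ 1 for all λ. Let F = ⊕_{λ∈Λ} χ_{[b(λ), b(λ)+c(λ))} and set l + 1 = max_{λ∈Λ} c(λ). If Λ is a singleton {λ} with b(λ) = 0 and c(λ) = 1, then d_I(F, χ_{[0,1)}) = 0; otherwise d_I(F, χ_{[0,1)}) = (l+1)/2. (This is the computation of the cohomology interleaving distance between a dg K[u]-module M concentrated in non-negative degrees with finite-dimensional cohomology, whose barcode is {[b(λ), b(λ)+c(λ))}, and the trivial module K, in terms of the cup-length l of M.) -/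

import Mathlib

open scoped ENNReal

/-- A persistence module: a functor from the poset `(ℝ, ≤)` to `K`-vector spaces,
presented by its structure maps. -/
structure PersistenceModule (K : Type) [Field K] where
  X : ℝ → Type
  [addCommGroupX : ∀ a, AddCommGroup (X a)]
  [moduleX : ∀ a, Module K (X a)]
  map : ∀ {a b : ℝ}, a ≤ b → (X a →ₗ[K] X b)
  map_refl : ∀ a : ℝ, map (le_refl a) = LinearMap.id
  map_trans : ∀ {a b c : ℝ} (hab : a ≤ b) (hbc : b ≤ c),
      map (hab.trans hbc) = (map hbc).comp (map hab)

attribute [instance] PersistenceModule.addCommGroupX PersistenceModule.moduleX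

/-- The pair `(φ, ψ)` is an `ε`-interleaving between the persistence modules `F` and `G`:
both are natural transformations (to the `ε`-shifts) and the two triangle identities hold. -/
structure IsInterleaving (K : Type) [Field K] (ε : ℝ) (F G : PersistenceModule K)
    (φ : ∀ a : ℝ, F.X a →ₗ[K] G.X (a + ε))
    (ψ : ∀ a : ℝ, G.X a →ₗ[K] F.X (a + ε)) : Prop where
  nonneg : 0 ≤ ε
  φ_nat : ∀ {a b : ℝ} (hab : a ≤ b),
      (φ b).comp (F.map hab) = (G.map (add_le_add hab (le_refl ε))).comp (φ a)
  ψ_nat : ∀ {a b : ℝ} (hab : a ≤ b),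
      (ψ b).comp (G.map hab) = (F.map (add_le_add hab (le_refl ε))).comp (ψ a)
  tri₁ : ∀ (a : ℝ) (h : a ≤ a + ε + ε), (ψ (a + ε)).comp (φ a) = F.map h
  tri₂ : ∀ (a : ℝ) (h : a ≤ a + ε + ε), (φ (a + ε)).comp (ψ a) = G.map h

/-- `F` and `G` are `ε`-interleaved. -/
def Interleaved (K : Type) [Field K] (ε : ℝ) (F G : PersistenceModule K) : Prop :=
  ∃ φ ψ, IsInterleaving K ε F G φ ψ

/-- The interleaving distance `d_I(F, G) ∈ [0, ∞]`: the infimum of the set of `ε ≥ 0` such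
that `F` and `G` are `ε`-interleaved (`∞` when this set is empty). -/
noncomputable def interleavingDist (K : Type) [Field K] (F G : PersistenceModule K) : ℝ≥0∞ :=
  sInf {x : ℝ≥0∞ | ∃ ε : ℝ, 0 ≤ ε ∧ Interleaved K ε F G ∧ x = ENNReal.ofReal ε}

attribute [local instance] Classical.propDecidable

lemma subsingleton_ite_bot (K : Type) [Field K] {J : Set ℝ} {a : ℝ} (ha : a ∉ J) :
    Subsingleton ↥(if a ∈ J then (⊤ : Submodule K K) else ⊥) := by
  rw [if_neg ha]
  infer_instance

/-- The interval module `χ_J` associated with an interval `J ⊆ ℝ`: the vector space `K`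
at points of `J` (realized as `⊤ ≤ K`), and `0` elsewhere, with identity/zero structure maps. -/
noncomputable def intervalModule (K : Type) [Field K] (J : Set ℝ) (hJ : J.OrdConnected) :
    PersistenceModule K where
  X a := ↥(if a ∈ J then (⊤ : Submodule K K) else ⊥)
  map {a b} hab :=
    if h : a ∈ J ∧ b ∈ J then
      Submodule.inclusion (le_of_eq (by rw [if_pos h.1, if_pos h.2]))
    else 0
  map_refl a := by
    by_cases ha : a ∈ J
    · rw [dif_pos ⟨ha, ha⟩]
      rfl
    · rw [dif_neg (fun h => ha h.1)]
      haveI := subsingleton_ite_bot K (J := J) ha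
      exact LinearMap.ext fun x => Subsingleton.elim _ _
  map_trans := by
    intro a b c hab hbc
    by_cases hac : a ∈ J ∧ c ∈ J
    · have hb : b ∈ J := hJ.out hac.1 hac.2 ⟨hab, hbc⟩
      rw [dif_pos hac, dif_pos ⟨hb, hac.2⟩, dif_pos ⟨hac.1, hb⟩]
      rfl
    · rw [dif_neg hac]
      rcases not_and_or.mp hac with ha | hc
      · haveI := subsingleton_ite_bot K (J := J) ha
        exact LinearMap.ext fun x => by
          rw [Subsingleton.elim x 0]
          simp
      · haveI := subsingleton_ite_bot K (J := J) hc
        exact LinearMap.ext fun x => Subsingleton.elim _ _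

/-- The interval module `χ_{[a,b)}`. -/
noncomputable def chiIco (K : Type) [Field K] (a b : ℝ) : PersistenceModule K :=
  intervalModule K (Set.Ico a b) Set.ordConnected_Ico

/-- The interval module `χ_{[a,∞)}`. -/
noncomputable def chiIci (K : Type) [Field K] (a : ℝ) : PersistenceModule K :=
  intervalModule K (Set.Ici a) Set.ordConnected_Ici

/-- The zero persistence module `χ_∅`. -/
noncomputable def zeroPM (K : Type) [Field K] : PersistenceModule K :=
  intervalModule K (∅ : Set ℝ) Set.ordConnected_empty

/-- The pointwise direct sum of a family of persistence modules. -/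
noncomputable def dsum (K : Type) [Field K] {ι : Type} (F : ι → PersistenceModule K) :
    PersistenceModule K where
  X a := Π₀ i, (F i).X a
  map {a b} hab := DFinsupp.mapRange.linearMap fun i => (F i).map hab
  map_refl a := by
    have : (fun i => (F i).map (le_refl a))
        = fun i => (LinearMap.id : (F i).X a →ₗ[K] (F i).X a) :=
      funext fun i => (F i).map_refl a
    rw [this]
    exact DFinsupp.mapRange.linearMap_id
  map_trans {a b c} hab hbc := by
    have : (fun i => (F i).map (hab.trans hbc)) =
        fun i => ((F i).map hbc).comp ((F i).map hab) :=
      funext fun i => (F i).map_trans hab hbc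
    rw [this]
    exact DFinsupp.mapRange.linearMap_comp _ _



/-! ### Auxiliary machinery -/

/-- The canonical map between conditional submodule pictures of `K`. -/
noncomputable def cm (K : Type) [Field K] (P Q : Prop) :
    ↥(if P then (⊤ : Submodule K K) else ⊥) →ₗ[K] ↥(if Q then (⊤ : Submodule K K) else ⊥) :=
  if h : P ∧ Q then Submodule.inclusion (le_of_eq (by rw [if_pos h.1, if_pos h.2])) else 0

/-- The `K`-valued coordinate of an element of a conditional submodule. -/
noncomputable def vl (K : Type) [Field K] (P : Prop) :
    ↥(if P then (⊤ : Submodule K K) else ⊥) →ₗ[K] K :=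
  Submodule.subtype _

lemma vl_injective (K : Type) [Field K] (P : Prop) : Function.Injective (vl K P) :=
  Submodule.injective_subtype _

lemma vl_eq_zero {K : Type} [Field K] {P : Prop}
    {y : ↥(if P then (⊤ : Submodule K K) else ⊥)} (h : vl K P y = 0) : y = 0 :=
  vl_injective K P (h.trans (map_zero (vl K P)).symm)

lemma vl_cm {K : Type} [Field K] (P Q : Prop) (x : ↥(if P then (⊤ : Submodule K K) else ⊥)) :
    vl K Q (cm K P Q x) = if P ∧ Q then vl K P x else 0 := by
  by_cases h : P ∧ Q
  · rw [if_pos h]; unfold cm; rw [dif_pos h]; rfl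
  · rw [if_neg h]; unfold cm; rw [dif_neg h]; rfl

lemma cm_zero {K : Type} [Field K] {P Q : Prop} (h : ¬(P ∧ Q)) : cm K P Q = 0 := by
  unfold cm; rw [dif_neg h]

noncomputable def el (K : Type) [Field K] {P : Prop} (hP : P) :
    ↥(if P then (⊤ : Submodule K K) else ⊥) :=
  ⟨1, by rw [if_pos hP]; trivial⟩

lemma vl_el {K : Type} [Field K] {P : Prop} (hP : P) : vl K P (el K hP) = 1 := rfl

lemma it_eq_zero {K : Type} [Field K] {P : Prop} (hP : ¬P)
    (y : ↥(if P then (⊤ : Submodule K K) else ⊥)) : y = 0 := by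
  have : Subsingleton ↥(if P then (⊤ : Submodule K K) else ⊥) := by
    rw [if_neg hP]; infer_instance
  exact this.elim y 0

lemma chi_map_eq {K : Type} [Field K] {lo hi : ℝ} {a b : ℝ} (hab : a ≤ b) :
    (chiIco K lo hi).map hab = cm K (a ∈ Set.Ico lo hi) (b ∈ Set.Ico lo hi) := rfl

lemma dsum_map_eq {K : Type} [Field K] {ι : Type} (Mf : ι → PersistenceModule K) {a b : ℝ}
    (hab : a ≤ b) :
    (dsum K Mf).map hab
      = DFinsupp.mapRange.linearMap (fun i => (Mf i).map hab) := rfl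

lemma dsum_map_lapply {K : Type} [Field K] {ι : Type} (Mf : ι → PersistenceModule K)
    {a b : ℝ} (hab : a ≤ b) (i : ι) :
    (DFinsupp.lapply (R := K) (M := fun i => (Mf i).X b) i).comp ((dsum K Mf).map hab)
      = ((Mf i).map hab).comp (DFinsupp.lapply i) := rfl

lemma dsum_map_apply' {K : Type} [Field K] {ι : Type} (Mf : ι → PersistenceModule K)
    {a b : ℝ} (hab : a ≤ b) (i : ι) (x : Π₀ i, (Mf i).X a) :
    DFinsupp.lapply (R := K) i ((dsum K Mf).map hab x)
      = (Mf i).map hab (DFinsupp.lapply (R := K) i x) := by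
  have := LinearMap.congr_fun (dsum_map_lapply Mf hab i) x
  exact this

lemma chi_map_val' {K : Type} [Field K] {lo hi : ℝ} {a b' : ℝ} (hab : a ≤ b')
    (x : (chiIco K lo hi).X a) :
    (chiIco K lo hi).map hab x
      = cm K (a ∈ Set.Ico lo hi) (b' ∈ Set.Ico lo hi) x := rfl
section Main

variable {K : Type} [Field K] {Λ : Type} [Fintype Λ] [Nonempty Λ]

/-- Zero maps give an interleaving as soon as `ε + ε` dominates all bar lengths. -/
lemma zeroInterleaved (b c : Λ → ℕ) (ε : ℝ) (hε : 0 ≤ ε)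
    (hsup : ∀ x, (c x : ℝ) ≤ ε + ε) (h1 : (1:ℝ) ≤ ε + ε) :
    Interleaved K ε (dsum K fun x => chiIco K (b x : ℝ) ((b x : ℝ) + (c x : ℝ)))
      (chiIco K 0 1) := by
  have hF : ∀ (a : ℝ) (h : a ≤ a + ε + ε),
      (dsum K fun x => chiIco K (b x : ℝ) ((b x : ℝ) + (c x : ℝ))).map h = 0 := by
    intro a h
    rw [dsum_map_eq]
    apply LinearMap.ext; intro xx
    refine DFinsupp.ext fun i => ?_
    have hni : ¬(a ∈ Set.Ico ((b i : ℝ)) ((b i : ℝ) + (c i : ℝ))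
        ∧ a + ε + ε ∈ Set.Ico ((b i : ℝ)) ((b i : ℝ) + (c i : ℝ))) := by
      rintro ⟨⟨h1', h2'⟩, h3', h4'⟩
      have := hsup i; linarith
    simp only [DFinsupp.mapRange.linearMap_apply, DFinsupp.mapRange_apply,
      LinearMap.zero_apply, DFinsupp.zero_apply]
    rw [chi_map_eq, cm_zero hni]
    rfl
  have hG : ∀ (a : ℝ) (h : a ≤ a + ε + ε), (chiIco K (0:ℝ) 1).map h = 0 := by
    intro a h
    have hni : ¬(a ∈ Set.Ico (0:ℝ) 1 ∧ a + ε + ε ∈ Set.Ico (0:ℝ) 1) := by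
      rintro ⟨⟨h1', h2'⟩, h3', h4'⟩; linarith
    rw [chi_map_eq]; exact cm_zero hni
  refine ⟨0, 0, ?_, ?_, ?_, ?_, ?_⟩
  · exact hε
  · intro a a' hab; simp
  · intro a a' hab; simp
  · intro a h; rw [hF a h]; simp
  · intro a h; rw [hG a h]; simp

/-- Key lower-bound lemma: an interleaving pushes a long bar into `[0,1)`. -/
lemma key (b c : Λ → ℕ) (ε : ℝ)
    (φ : ∀ a : ℝ, (dsum K fun x => chiIco K (b x : ℝ) ((b x : ℝ) + (c x : ℝ))).X a
        →ₗ[K] (chiIco K 0 1).X (a + ε))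
    (ψ : ∀ a : ℝ, (chiIco K 0 1).X a
        →ₗ[K] (dsum K fun x => chiIco K (b x : ℝ) ((b x : ℝ) + (c x : ℝ))).X (a + ε))
    (h : IsInterleaving K ε (dsum K fun x => chiIco K (b x : ℝ) ((b x : ℝ) + (c x : ℝ)))
        (chiIco K 0 1) φ ψ)
    (lam : Λ) (a t : ℝ) (h1 : (b lam : ℝ) ≤ a) (h2 : a + ε ≤ t)
    (h3 : t + ε < (b lam : ℝ) + (c lam : ℝ)) : t ∈ Set.Ico (0:ℝ) 1 := by
  have hε := h.nonneg
  have hma : a ∈ Set.Ico ((b lam : ℝ)) ((b lam : ℝ) + (c lam : ℝ)) := ⟨h1, by linarith⟩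
  have hmt : t + ε ∈ Set.Ico ((b lam : ℝ)) ((b lam : ℝ) + (c lam : ℝ)) := ⟨by linarith, h3⟩
  have haa : a ≤ a + ε + ε := by linarith
  have h2' : a + ε + ε ≤ t + ε := add_le_add h2 (le_refl ε)
  by_contra ht
  set xx : (dsum K fun x => chiIco K (b x : ℝ) ((b x : ℝ) + (c x : ℝ))).X a
    := DFinsupp.single lam (el K hma) with hxx
  have hz : (chiIco K 0 1).map h2 (φ a xx) = 0 := it_eq_zero ht _
  have e1 : ψ t ((chiIco K 0 1).map h2 (φ a xx))
      = (dsum K fun x => chiIco K (b x : ℝ) ((b x : ℝ) + (c x : ℝ))).map h2'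
          (ψ (a + ε) (φ a xx)) :=
    LinearMap.congr_fun (h.ψ_nat h2) (φ a xx)
  have e2 : ψ (a + ε) (φ a xx)
      = (dsum K fun x => chiIco K (b x : ℝ) ((b x : ℝ) + (c x : ℝ))).map haa xx :=
    LinearMap.congr_fun (h.tri₁ a haa) xx
  have e3 : (dsum K fun x => chiIco K (b x : ℝ) ((b x : ℝ) + (c x : ℝ))).map h2'
        ((dsum K fun x => chiIco K (b x : ℝ) ((b x : ℝ) + (c x : ℝ))).map haa xx)
      = (dsum K fun x => chiIco K (b x : ℝ) ((b x : ℝ) + (c x : ℝ))).map (haa.trans h2') xx :=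
    (LinearMap.congr_fun
      ((dsum K fun x => chiIco K (b x : ℝ) ((b x : ℝ) + (c x : ℝ))).map_trans haa h2') xx).symm
  have e4 : (dsum K fun x => chiIco K (b x : ℝ) ((b x : ℝ) + (c x : ℝ))).map (haa.trans h2') xx
      = 0 := by
    rw [← e3, ← e2, ← e1, hz, map_zero]
  have e5 : DFinsupp.lapply (R := K) lam
        ((dsum K fun x => chiIco K (b x : ℝ) ((b x : ℝ) + (c x : ℝ))).map (haa.trans h2') xx)
      = (chiIco K (b lam : ℝ) ((b lam : ℝ) + (c lam : ℝ))).map (haa.trans h2')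
          (DFinsupp.lapply (R := K) lam xx) :=
    LinearMap.congr_fun (dsum_map_lapply _ (haa.trans h2') lam) xx
  have e6 : DFinsupp.lapply (R := K) lam xx = el K hma := by
    rw [hxx, DFinsupp.lapply_apply]; exact DFinsupp.single_eq_same
  have e8 : (chiIco K (b lam : ℝ) ((b lam : ℝ) + (c lam : ℝ))).map (haa.trans h2') (el K hma)
      = cm K (a ∈ Set.Ico ((b lam : ℝ)) ((b lam : ℝ) + (c lam : ℝ)))
          (t + ε ∈ Set.Ico ((b lam : ℝ)) ((b lam : ℝ) + (c lam : ℝ))) (el K hma) :=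
    LinearMap.congr_fun (chi_map_eq (haa.trans h2')) (el K hma)
  have e7 : vl K (t + ε ∈ Set.Ico ((b lam : ℝ)) ((b lam : ℝ) + (c lam : ℝ)))
      (cm K (a ∈ Set.Ico ((b lam : ℝ)) ((b lam : ℝ) + (c lam : ℝ)))
        (t + ε ∈ Set.Ico ((b lam : ℝ)) ((b lam : ℝ) + (c lam : ℝ))) (el K hma)) = 1 := by
    rw [vl_cm, if_pos ⟨hma, hmt⟩, vl_el]
  erw [← e8, ← e6, ← e5, e4, map_zero] at e7
  exact one_ne_zero e7.symm

end Main
section Main2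

variable {K : Type} [Field K] {Λ : Type} [Fintype Λ] [Nonempty Λ]

lemma lowerBound (b c : Λ → ℕ) (hc : ∀ x, 1 ≤ c x) (l : ℕ) (hl : l + 1 = Finset.univ.sup c)
    (hne : ¬((∀ x y : Λ, x = y) ∧ ∀ x, b x = 0 ∧ c x = 1)) (ε : ℝ) (hε : 0 ≤ ε)
    (hI : Interleaved K ε (dsum K fun x => chiIco K (b x : ℝ) ((b x : ℝ) + (c x : ℝ)))
      (chiIco K 0 1)) :
    ((l : ℝ) + 1) / 2 ≤ ε := by
  obtain ⟨φ, ψ, h⟩ := hI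
  by_contra hlt
  push_neg at hlt
  obtain ⟨i0, -, hi0⟩ := Finset.exists_mem_eq_sup Finset.univ Finset.univ_nonempty c
  have hcl : (c i0 : ℝ) = (l : ℝ) + 1 := by
    have : c i0 = l + 1 := by omega
    rw [this]; push_cast; ring
  have h2e : ε + ε < (c i0 : ℝ) := by rw [hcl]; linarith
  have hA := key b c ε φ ψ h i0 (b i0 : ℝ) ((b i0 : ℝ) + ε) le_rfl le_rfl (by linarith)
  have hA1 : (b i0 : ℝ) + ε < 1 := hA.2
  have hB : (b i0 : ℝ) + (c i0 : ℝ) ≤ 1 + ε := by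
    by_contra hB'
    push_neg at hB'
    have hk := key b c ε φ ψ h i0 (b i0 : ℝ) 1 le_rfl (by linarith) (by linarith)
    exact lt_irrefl (1:ℝ) hk.2
  have hb0R : (0:ℝ) ≤ (b i0 : ℝ) := Nat.cast_nonneg _
  have hc1R : (1:ℝ) ≤ (c i0 : ℝ) := by exact_mod_cast hc i0
  -- c i0 < 2 hence c i0 = 1, l = 0, b i0 = 0
  have hcl2 : (c i0 : ℝ) < 2 := by linarith
  have hc1 : c i0 = 1 := by
    have h2 : c i0 < 2 := by exact_mod_cast hcl2
    have := hc i0; omega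
  have hl0 : l = 0 := by omega
  have hcall : ∀ x, c x = 1 := by
    intro x
    have hle : c x ≤ Finset.univ.sup c := Finset.le_sup (Finset.mem_univ x)
    have := hc x; omega
  have hε1 : ε + ε < 1 := by
    rw [hl0] at hlt; push_cast at hlt; linarith
  by_cases hball : ∀ x, b x = 0
  · -- all bars are [0,1), with at least two of them
    have hne2 : ¬(∀ x y : Λ, x = y) := fun hs => hne ⟨hs, fun x => ⟨hball x, hcall x⟩⟩
    push_neg at hne2
    obtain ⟨i1, i2, h12⟩ := hne2
    have hm0 : ∀ x : Λ, (0:ℝ) ∈ Set.Ico ((b x : ℝ)) ((b x : ℝ) + (c x : ℝ)) := by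
      intro x
      rw [hball x, hcall x]
      constructor <;> norm_num
    have hm2 : ∀ x : Λ, (0:ℝ) + ε + ε ∈ Set.Ico ((b x : ℝ)) ((b x : ℝ) + (c x : ℝ)) := by
      intro x
      rw [hball x, hcall x]
      constructor <;> push_cast <;> linarith
    have h00 : (0:ℝ) ≤ 0 + ε + ε := by linarith
    -- value of F.map h00 on the canonical generator at index j
    have hval : ∀ j : Λ, DFinsupp.lapply (R := K) j
        ((dsum K fun x => chiIco K (b x : ℝ) ((b x : ℝ) + (c x : ℝ))).map h00
          (DFinsupp.single j (el K (hm0 j))))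
        = cm K ((0:ℝ) ∈ Set.Ico ((b j : ℝ)) ((b j : ℝ) + (c j : ℝ)))
            ((0:ℝ) + ε + ε ∈ Set.Ico ((b j : ℝ)) ((b j : ℝ) + (c j : ℝ))) (el K (hm0 j)) := by
      intro j
      erw [dsum_map_apply', DFinsupp.lapply_apply, DFinsupp.single_eq_same, chi_map_eq]
      rfl
    have hvano : DFinsupp.lapply (R := K) i1
        ((dsum K fun x => chiIco K (b x : ℝ) ((b x : ℝ) + (c x : ℝ))).map h00
          (DFinsupp.single i2 (el K (hm0 i2)))) = 0 := by
      erw [dsum_map_apply', DFinsupp.lapply_apply,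
        DFinsupp.single_eq_of_ne h12, map_zero]
    -- φ 0 does not kill the generators
    have hnz : ∀ (j : Λ) (xx : (dsum K fun x => chiIco K (b x : ℝ) ((b x : ℝ) + (c x : ℝ))).X 0),
        DFinsupp.lapply (R := K) j
          ((dsum K fun x => chiIco K (b x : ℝ) ((b x : ℝ) + (c x : ℝ))).map h00 xx) ≠ 0
        → φ 0 xx ≠ 0 := by
      intro j xx hxx hz
      have e2 : ψ (0 + ε) (φ 0 xx)
          = (dsum K fun x => chiIco K (b x : ℝ) ((b x : ℝ) + (c x : ℝ))).map h00 xx :=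
        LinearMap.congr_fun (h.tri₁ 0 h00) xx
      rw [hz, map_zero] at e2
      erw [← e2, map_zero] at hxx
      exact hxx rfl
    have hphi : ∀ j : Λ, φ 0 (DFinsupp.single j (el K (hm0 j))) ≠ 0 := by
      intro j
      apply hnz j
      rw [hval j]
      intro hcc
      have := congrArg (vl K ((0:ℝ) + ε + ε ∈ Set.Ico ((b j : ℝ)) ((b j : ℝ) + (c j : ℝ)))) hcc
      erw [vl_cm, if_pos ⟨hm0 j, hm2 j⟩, vl_el, map_zero] at this
      exact one_ne_zero this
    -- the coordinates of the images
    set g₁ : K := vl K ((0:ℝ) + ε ∈ Set.Ico (0:ℝ) 1) (φ 0 (DFinsupp.single i1 (el K (hm0 i1))))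
      with hg₁def
    set g₂ : K := vl K ((0:ℝ) + ε ∈ Set.Ico (0:ℝ) 1) (φ 0 (DFinsupp.single i2 (el K (hm0 i2))))
      with hg₂def
    have hg₁ : g₁ ≠ 0 := fun h0 => hphi i1 (vl_eq_zero h0)
    have hg₂ : g₂ ≠ 0 := fun h0 => hphi i2 (vl_eq_zero h0)
    -- the combination z is killed by φ 0
    have hφz : φ 0 (g₂ • DFinsupp.single i1 (el K (hm0 i1))
        - g₁ • DFinsupp.single i2 (el K (hm0 i2))) = 0 := by
      apply vl_eq_zero (P := (0:ℝ) + ε ∈ Set.Ico (0:ℝ) 1)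
      erw [map_sub, map_smul, map_smul, map_sub, map_smul, map_smul,
        ← hg₁def, ← hg₂def, smul_eq_mul, smul_eq_mul, mul_comm]
      ring
    have e2 : ψ (0 + ε) (φ 0 (g₂ • DFinsupp.single i1 (el K (hm0 i1))
        - g₁ • DFinsupp.single i2 (el K (hm0 i2))))
        = (dsum K fun x => chiIco K (b x : ℝ) ((b x : ℝ) + (c x : ℝ))).map h00
            (g₂ • DFinsupp.single i1 (el K (hm0 i1))
              - g₁ • DFinsupp.single i2 (el K (hm0 i2))) :=
      LinearMap.congr_fun (h.tri₁ 0 h00) _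
    rw [hφz, map_zero] at e2
    -- evaluate the coordinate at i1
    have hev : vl K ((0:ℝ) + ε + ε ∈ Set.Ico ((b i1 : ℝ)) ((b i1 : ℝ) + (c i1 : ℝ)))
        (DFinsupp.lapply (R := K) i1
          ((dsum K fun x => chiIco K (b x : ℝ) ((b x : ℝ) + (c x : ℝ))).map h00
            (g₂ • DFinsupp.single i1 (el K (hm0 i1))
              - g₁ • DFinsupp.single i2 (el K (hm0 i2))))) = g₂ := by
      erw [map_sub, map_smul, map_smul, map_sub, map_smul, map_smul,
        hval i1, hvano,
        vl_cm, if_pos ⟨hm0 i1, hm2 i1⟩, vl_el, map_zero]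
      rw [smul_eq_mul, smul_eq_mul]
      ring
    erw [← e2, map_zero] at hev
    exact hg₂ hev.symm
  · push_neg at hball
    obtain ⟨i1, hb1⟩ := hball
    have hb1' : (1:ℝ) ≤ (b i1 : ℝ) := by
      have : 1 ≤ b i1 := by omega
      exact_mod_cast this
    have hc1' : (c i1 : ℝ) = 1 := by rw [hcall i1]; norm_num
    have hk := key b c ε φ ψ h i1 (b i1 : ℝ) ((b i1 : ℝ) + ε) le_rfl le_rfl
      (by rw [hc1']; linarith)
    have := hk.2
    linarith

end Main2
section Main3

variable {K : Type} [Field K] {Λ : Type} [Fintype Λ] [Nonempty Λ]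

lemma dfinsupp_ext' {ι : Type} (Mf : ι → PersistenceModule K) {t : ℝ}
    (x y : Π₀ i, (Mf i).X t)
    (h : ∀ j, DFinsupp.lapply (R := K) j x = DFinsupp.lapply (R := K) j y) : x = y :=
  DFinsupp.ext h

lemma lapply_lsingle_same {ι : Type} {N : ι → Type} [∀ i, AddCommGroup (N i)]
    [∀ i, Module K (N i)] (i : ι) (y : N i) :
    DFinsupp.lapply (R := K) i (DFinsupp.lsingle (R := K) i y) = y := by
  simp

lemma excInterleaved (b c : Λ → ℕ) (hs : ∀ x y : Λ, x = y) (hbc : ∀ x, b x = 0 ∧ c x = 1) :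
    Interleaved K 0 (dsum K fun x => chiIco K (b x : ℝ) ((b x : ℝ) + (c x : ℝ)))
      (chiIco K 0 1) := by
  obtain ⟨i₀⟩ := (inferInstance : Nonempty Λ)
  have hIco : ∀ x : Λ, Set.Ico ((b x : ℝ)) ((b x : ℝ) + (c x : ℝ)) = Set.Ico (0:ℝ) 1 := by
    intro x
    rw [(hbc x).1, (hbc x).2]
    norm_num
  refine ⟨fun a => (cm K (a ∈ Set.Ico ((b i₀ : ℝ)) ((b i₀ : ℝ) + (c i₀ : ℝ)))
      ((a + 0) ∈ Set.Ico (0:ℝ) 1)).comp (DFinsupp.lapply i₀),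
    fun a => (DFinsupp.lsingle i₀).comp (cm K (a ∈ Set.Ico (0:ℝ) 1)
      ((a + 0) ∈ Set.Ico ((b i₀ : ℝ)) ((b i₀ : ℝ) + (c i₀ : ℝ)))), ?_, ?_, ?_, ?_, ?_⟩
  · exact le_refl 0
  · -- φ naturality
    intro a a' hab
    apply LinearMap.ext; intro xx
    suffices hq : cm K (a' ∈ Set.Ico ((b i₀ : ℝ)) ((b i₀ : ℝ) + (c i₀ : ℝ)))
        ((a' + 0) ∈ Set.Ico (0:ℝ) 1)
        (DFinsupp.lapply (R := K) i₀
          ((dsum K fun x => chiIco K (b x : ℝ) ((b x : ℝ) + (c x : ℝ))).map hab xx))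
        = (chiIco K (0:ℝ) 1).map (add_le_add hab (le_refl (0:ℝ)))
            (cm K (a ∈ Set.Ico ((b i₀ : ℝ)) ((b i₀ : ℝ) + (c i₀ : ℝ)))
              ((a + 0) ∈ Set.Ico (0:ℝ) 1) (DFinsupp.lapply (R := K) i₀ xx)) by
      exact hq
    apply vl_injective K ((a' + 0) ∈ Set.Ico (0:ℝ) 1)
    erw [dsum_map_apply', chi_map_val' hab, chi_map_val' (add_le_add hab (le_refl (0:ℝ))),
      vl_cm, vl_cm, vl_cm, vl_cm]
    simp only [hIco, add_zero]
    split_ifs <;> simp_all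
  · -- ψ naturality
    intro a a' hab
    apply LinearMap.ext; intro xx
    suffices hq : DFinsupp.lsingle (R := K) i₀ (cm K (a' ∈ Set.Ico (0:ℝ) 1)
        ((a' + 0) ∈ Set.Ico ((b i₀ : ℝ)) ((b i₀ : ℝ) + (c i₀ : ℝ)))
          ((chiIco K (0:ℝ) 1).map hab xx))
        = (dsum K fun x => chiIco K (b x : ℝ) ((b x : ℝ) + (c x : ℝ))).map
            (add_le_add hab (le_refl (0:ℝ)))
            (DFinsupp.lsingle (R := K) i₀ (cm K (a ∈ Set.Ico (0:ℝ) 1)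
              ((a + 0) ∈ Set.Ico ((b i₀ : ℝ)) ((b i₀ : ℝ) + (c i₀ : ℝ))) xx)) by
      exact hq
    apply dfinsupp_ext'
    intro j
    obtain rfl : i₀ = j := hs i₀ j
    erw [lapply_lsingle_same, dsum_map_apply', lapply_lsingle_same,
      chi_map_val' hab, chi_map_val' (add_le_add hab (le_refl (0:ℝ)))]
    apply vl_injective K ((a' + 0) ∈ Set.Ico ((b i₀ : ℝ)) ((b i₀ : ℝ) + (c i₀ : ℝ)))
    erw [vl_cm, vl_cm, vl_cm, vl_cm]
    simp only [hIco, add_zero]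
    split_ifs <;> simp_all
  · -- tri₁
    intro a h
    apply LinearMap.ext; intro xx
    suffices hq : DFinsupp.lsingle (R := K) i₀ (cm K ((a + 0) ∈ Set.Ico (0:ℝ) 1)
        ((a + 0 + 0) ∈ Set.Ico ((b i₀ : ℝ)) ((b i₀ : ℝ) + (c i₀ : ℝ)))
          (cm K (a ∈ Set.Ico ((b i₀ : ℝ)) ((b i₀ : ℝ) + (c i₀ : ℝ)))
            ((a + 0) ∈ Set.Ico (0:ℝ) 1) (DFinsupp.lapply (R := K) i₀ xx)))
        = (dsum K fun x => chiIco K (b x : ℝ) ((b x : ℝ) + (c x : ℝ))).map h xx by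
      exact hq
    apply dfinsupp_ext'
    intro j
    obtain rfl : i₀ = j := hs i₀ j
    erw [lapply_lsingle_same, dsum_map_apply', chi_map_val' h]
    apply vl_injective K ((a + 0 + 0) ∈ Set.Ico ((b i₀ : ℝ)) ((b i₀ : ℝ) + (c i₀ : ℝ)))
    erw [vl_cm, vl_cm, vl_cm]
    simp only [hIco, add_zero]
    split_ifs <;> simp_all
  · -- tri₂
    intro a h
    apply LinearMap.ext; intro xx
    suffices hq : cm K ((a + 0) ∈ Set.Ico ((b i₀ : ℝ)) ((b i₀ : ℝ) + (c i₀ : ℝ)))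
        ((a + 0 + 0) ∈ Set.Ico (0:ℝ) 1)
        (DFinsupp.lapply (R := K)
          (M := fun i => (chiIco K (b i : ℝ) ((b i : ℝ) + (c i : ℝ))).X (a + 0)) i₀
          (DFinsupp.lsingle (R := K) i₀
            (cm K (a ∈ Set.Ico (0:ℝ) 1)
              ((a + 0) ∈ Set.Ico ((b i₀ : ℝ)) ((b i₀ : ℝ) + (c i₀ : ℝ))) xx)))
        = (chiIco K (0:ℝ) 1).map h xx by
      exact hq
    erw [lapply_lsingle_same, chi_map_val' h]
    apply vl_injective K ((a + 0 + 0) ∈ Set.Ico (0:ℝ) 1)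
    erw [vl_cm, vl_cm, vl_cm]
    simp only [hIco, add_zero]
    split_ifs <;> simp_all

end Main3

/-- for a finite direct sum of interval modules `χ_{[b λ, b λ + c λ)}` with
`c λ ≥ 1` and `l + 1 = max c`, the interleaving distance to `χ_{[0,1)}` is `0` when the
family is a single bar `[0,1)`, and `(l+1)/2` otherwise. -/
theorem interleavingDist_to_unit_bar {K : Type} [Field K] {Λ : Type} [Fintype Λ] [Nonempty Λ]
    (b c : Λ → ℕ) (hc : ∀ x, 1 ≤ c x) (l : ℕ) (hl : l + 1 = Finset.univ.sup c) :
    (((∀ x y : Λ, x = y) ∧ ∀ x, b x = 0 ∧ c x = 1) →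
      interleavingDist K (dsum K fun x => chiIco K (b x : ℝ) ((b x : ℝ) + (c x : ℝ)))
        (chiIco K 0 1) = 0) ∧
    (¬ ((∀ x y : Λ, x = y) ∧ ∀ x, b x = 0 ∧ c x = 1) →
      interleavingDist K (dsum K fun x => chiIco K (b x : ℝ) ((b x : ℝ) + (c x : ℝ)))
        (chiIco K 0 1) = ENNReal.ofReal (((l : ℝ) + 1) / 2)) := by
  constructor
  · rintro ⟨hs, hbc⟩
    refine le_antisymm ?_ zero_le
    apply sInf_le
    exact ⟨0, le_refl 0, excInterleaved b c hs hbc, by simp⟩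
  · intro hne
    have hceps : ∀ x, (c x : ℝ) ≤ ((l : ℝ) + 1) / 2 + ((l : ℝ) + 1) / 2 := by
      intro x
      have hle : c x ≤ l + 1 := by rw [hl]; exact Finset.le_sup (Finset.mem_univ x)
      have : (c x : ℝ) ≤ (l : ℝ) + 1 := by exact_mod_cast hle
      linarith
    have h1 : (1:ℝ) ≤ ((l : ℝ) + 1) / 2 + ((l : ℝ) + 1) / 2 := by
      have : (0:ℝ) ≤ (l : ℝ) := Nat.cast_nonneg l
      linarith
    have hpos : (0:ℝ) ≤ ((l : ℝ) + 1) / 2 := by positivity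
    apply le_antisymm
    · apply sInf_le
      exact ⟨((l : ℝ) + 1) / 2, hpos, zeroInterleaved b c _ hpos hceps h1, rfl⟩
    · apply le_sInf
      rintro x ⟨ε, hε0, hI, rfl⟩
      exact ENNReal.ofReal_le_ofReal (lowerBound b c hc l hl hne ε hε0 hI)
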